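/- If f₁, f₂, f₃ are orthonormal imaginary octonions, then the products f₂f₃, f₃f₁, f₁f₂ are mutually orthogonal unit imaginary octonions. -/

import Mathlib

/-!
Write an octonion as a pair of quaternions. In these eight real coordinates the inner product is
the Euclidean one, and the three facts needed are polynomial identities: the norm is
multiplicative, `Re (x y) = -⟨x, y⟩` for imaginary `x`, and, for imaginary `x, y`,
`⟨x y, y z⟩ = 2 ⟨x, y⟩ ⟨y, z⟩ - |y|² ⟨x, z⟩`
(the polarized composition law with `y² = -|y|²`).
For an orthonormal triple the first gives unit length, the second imaginarity, and the third,
applied cyclically, orthogonality of the products.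
-/


noncomputable section

open Quaternion

/-- Octonions as pairs of quaternions (Cayley–Dickson construction). -/
abbrev Octo : Type := ℍ[ℝ] × ℍ[ℝ]

/-- Octonion multiplication: (q,r)(s,t) = (qs - t̄r, tq + rs̄). -/
def omul (x y : Octo) : Octo :=
  (x.1 * y.1 - star y.2 * x.2, y.2 * x.1 + x.2 * star y.1)

/-- Octonion conjugation: (q,r)̄ = (q̄, -r). -/
def oconj (x : Octo) : Octo := (star x.1, -x.2)

/-- Inner product ⟨x,y⟩ = (x ȳ + y x̄)/2 (a real multiple of 1, returned as a real). -/
def oinner (x y : Octo) : ℝ :=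
  ((omul x (oconj y) + omul y (oconj x)).1).re / 2

/-- x is an imaginary octonion: x + x̄ = 0. -/
def IsIm (x : Octo) : Prop := x + oconj x = 0

/-- Embedding of the reals into the octonions. -/
def oR (r : ℝ) : Octo := ((r : ℍ[ℝ]), 0)

/-- Cross product x×y = (xy - yx)/2. -/
def ocross (x y : Octo) : Octo := (2⁻¹ : ℝ) • (omul x y - omul y x)

/-- Norm of an octonion. -/
def onorm (x : Octo) : ℝ := Real.sqrt (oinner x x)

/-- Associator [x,y,z] = (xy)z - x(yz). -/
def oassoc (x y z : Octo) : Octo := omul (omul x y) z - omul x (omul y z)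

/-- f₁,f₂,f₃ are orthonormal. -/
def OrthoTriple (f1 f2 f3 : Octo) : Prop :=
  oinner f1 f1 = 1 ∧ oinner f2 f2 = 1 ∧ oinner f3 f3 = 1 ∧
  oinner f1 f2 = 0 ∧ oinner f1 f3 = 0 ∧ oinner f2 f3 = 0

theorem oinner_eq_euclidean (x y : Octo) : oinner x y =
    x.1.re * y.1.re + x.1.imI * y.1.imI + x.1.imJ * y.1.imJ + x.1.imK * y.1.imK +
    x.2.re * y.2.re + x.2.imI * y.2.imI + x.2.imJ * y.2.imJ + x.2.imK * y.2.imK := by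
  simp only [oinner, omul, oconj, star_neg, neg_mul, sub_neg_eq_add, star_star, Prod.mk_add_mk,
    add_add_neg_add_cancel, neg_add_cancel, re_add, re_mul, re_star, imI_star, mul_neg, imJ_star,
    imK_star]
  ring

theorem oinner_comm (x y : Octo) : oinner x y = oinner y x := by
  rw [oinner_eq_euclidean, oinner_eq_euclidean]
  ring

theorem isIm_iff_re_eq_zero {x : Octo} : IsIm x ↔ x.1.re = 0 := by
  simp [IsIm, oconj, Prod.ext_iff, Quaternion.ext_iff]

theorem oinner_omul_self (x y : Octo) :
    oinner (omul x y) (omul x y) = oinner x x * oinner y y := by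
  simp only [omul, oinner_eq_euclidean, re_sub, re_mul, re_star, imI_star, neg_mul,
    sub_neg_eq_add, imJ_star, imK_star, imI_sub, imI_mul, imJ_sub, imJ_mul, imK_sub, imK_mul,
    re_add, mul_neg, imI_add, imJ_add, imK_add]
  ring

theorem re_omul_of_isIm {x : Octo} (hx : IsIm x) (y : Octo) :
    (omul x y).1.re = -oinner x y := by
  rw [isIm_iff_re_eq_zero] at hx
  simp only [omul, re_sub, re_mul, hx, zero_mul, zero_sub, re_star, imI_star, neg_mul,
    sub_neg_eq_add, imJ_star, imK_star, oinner_eq_euclidean, zero_add, neg_add_rev]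
  ring

theorem isIm_omul_of_oinner_eq_zero {x y : Octo} (hx : IsIm x) (hxy : oinner x y = 0) :
    IsIm (omul x y) := by
  rw [isIm_iff_re_eq_zero, re_omul_of_isIm hx, hxy, neg_zero]

theorem oinner_omul_omul_of_isIm {x y : Octo} (hx : IsIm x) (hy : IsIm y) (z : Octo) :
    oinner (omul x y) (omul y z) =
      2 * oinner x y * oinner y z - oinner y y * oinner x z := by
  rw [isIm_iff_re_eq_zero] at hx hy
  simp only [omul, oinner_eq_euclidean, re_sub, re_mul, hx, hy, mul_zero, zero_sub, re_star,
    imI_star, neg_mul, sub_neg_eq_add, imJ_star, imK_star, zero_mul, imI_sub, imI_mul, add_zero,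
    zero_add, imJ_sub, imJ_mul, imK_sub, imK_mul, re_add, mul_neg, imI_add, imJ_add, imK_add]
  ring

theorem oinner_omul_omul_eq_zero {x y z : Octo} (hx : IsIm x) (hy : IsIm y)
    (hxy : oinner x y = 0) (hxz : oinner x z = 0) :
    oinner (omul x y) (omul y z) = 0 := by
  rw [oinner_omul_omul_of_isIm hx hy, hxy, hxz]
  ring

/-- For orthonormal imaginary f₁,f₂,f₃, the products f₂f₃, f₃f₁, f₁f₂ are mutually
    orthogonal unit imaginary octonions. -/
theorem stmt6 (f1 f2 f3 : Octo) (h1 : IsIm f1) (h2 : IsIm f2) (h3 : IsIm f3)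
    (hortho : OrthoTriple f1 f2 f3) :
    IsIm (omul f2 f3) ∧ IsIm (omul f3 f1) ∧ IsIm (omul f1 f2) ∧
    oinner (omul f2 f3) (omul f2 f3) = 1 ∧
    oinner (omul f3 f1) (omul f3 f1) = 1 ∧
    oinner (omul f1 f2) (omul f1 f2) = 1 ∧
    oinner (omul f2 f3) (omul f3 f1) = 0 ∧
    oinner (omul f2 f3) (omul f1 f2) = 0 ∧
    oinner (omul f3 f1) (omul f1 f2) = 0 := by
  obtain ⟨n1, n2, n3, o12, o13, o23⟩ := hortho
  have o21 : oinner f2 f1 = 0 := by rwa [oinner_comm]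
  have o31 : oinner f3 f1 = 0 := by rwa [oinner_comm]
  have o32 : oinner f3 f2 = 0 := by rwa [oinner_comm]
  refine ⟨isIm_omul_of_oinner_eq_zero h2 o23, isIm_omul_of_oinner_eq_zero h3 o31,
    isIm_omul_of_oinner_eq_zero h1 o12, ?_, ?_, ?_,
    oinner_omul_omul_eq_zero h2 h3 o23 o21, ?_, oinner_omul_omul_eq_zero h3 h1 o31 o32⟩
  · rw [oinner_omul_self, n2, n3, one_mul]
  · rw [oinner_omul_self, n3, n1, one_mul]
  · rw [oinner_omul_self, n1, n2, one_mul]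
  · rw [oinner_comm]
    exact oinner_omul_omul_eq_zero h1 h2 o12 o13
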